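/- Splitting a plane rooted tree at each of its leaves defines a coassociative coproduct: if Δ(F_w) = ∑_{w→(w₀,w₁)} F_{w₀} ⊗ F_{w₁} sums over all single-leaf splittings of w, then (Δ ⊗ 1)∘Δ = (1 ⊗ Δ)∘Δ, both sides equaling the sum of F_{w₀} ⊗ F_{w₁} ⊗ F_{w₂} over all 2-fold splittings of w. -/
import Mathlib


open TensorProduct

/-- Plane rooted trees: a root node with an ordered (possibly empty) list of subtrees.
`node []` is a single leaf. -/
inductive PTree : Type
  | node : List PTree → PTree

mutual
  /-- All splittings of a plane rooted tree at a single leaf: cutting along the path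
  from a leaf to the root produces an ordered pair of trees, one pair for each leaf,
  listed left to right. -/
  def PTree.splits : PTree → List (PTree × PTree)
    | .node [] => [(.node [], .node [])]
    | .node (t :: ts) => (splitsAux (t :: ts)).map fun p => (PTree.node p.1, PTree.node p.2)

  def splitsAux : List PTree → List (List PTree × List PTree)
    | [] => []
    | t :: ts =>
        (PTree.splits t).map (fun p => ([p.1], p.2 :: ts)) ++
          (splitsAux ts).map fun p => (t :: p.1, p.2)
end

/-- All 2-fold splittings of a plane rooted tree, at a size-2 multiset of leaves,
producing ordered triples of trees. -/
def PTree.splits2 (t : PTree) : List (PTree × PTree × PTree) :=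
  (PTree.splits t).flatMap fun p => (PTree.splits p.2).map fun q => (p.1, q.1, q.2)

/-- The graded vector space with basis the plane rooted trees. -/
abbrev TreeSpace : Type := PTree →₀ ℚ

noncomputable instance : Zero (TensorProduct ℚ TreeSpace TreeSpace) := AddMonoid.toZero

noncomputable instance :
    Zero (TensorProduct ℚ TreeSpace (TensorProduct ℚ TreeSpace TreeSpace)) := AddMonoid.toZero

noncomputable def deltaAux (t : PTree) : TensorProduct ℚ TreeSpace TreeSpace :=
  (((PTree.splits t).map fun p =>
      Finsupp.single p.1 (1 : ℚ) ⊗ₜ[ℚ] Finsupp.single p.2 (1 : ℚ) :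
        List (TensorProduct ℚ TreeSpace TreeSpace))).sum

/-- The coproduct given by splitting: `Δ F_w = ∑_{w→(w₀,w₁)} F_{w₀} ⊗ F_{w₁}`. -/
noncomputable def delta : TreeSpace →ₗ[ℚ] TensorProduct ℚ TreeSpace TreeSpace :=
  Finsupp.lift (TensorProduct ℚ TreeSpace TreeSpace) ℚ PTree deltaAux

def PTree.lsplits2 (t : PTree) : List (PTree × PTree × PTree) :=
  (PTree.splits t).flatMap fun p => (PTree.splits p.1).map fun q => (q.1, q.2, p.2)

def LA (l : List PTree) : List (List PTree × List PTree × List PTree) :=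
  (splitsAux l).flatMap fun p => (splitsAux p.1).map fun q => (q.1, q.2, p.2)

def RA (l : List PTree) : List (List PTree × List PTree × List PTree) :=
  (splitsAux l).flatMap fun p => (splitsAux p.2).map fun q => (p.1, q.1, q.2)

lemma shuffle {α : Type*} (a b c d : List α) : (a ++ b ++ (c ++ d)).Perm (a ++ c ++ (b ++ d)) := by
  have h : (b ++ (c ++ d)).Perm (c ++ (b ++ d)) := by
    rw [← List.append_assoc, ← List.append_assoc]
    exact List.perm_append_comm.append_right d
  rw [List.append_assoc, List.append_assoc]
  exact h.append_left a

lemma splitsAux_ne (l : List PTree) : ∀ p ∈ splitsAux l, p.1 ≠ [] ∧ p.2 ≠ [] := by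
  induction l with
  | nil => simp [splitsAux]
  | cons t ts ih =>
    intro p hp
    simp only [splitsAux, List.mem_append, List.mem_map] at hp
    rcases hp with ⟨q, _, rfl⟩ | ⟨q, hq, rfl⟩
    · simp
    · exact ⟨by simp, (ih q hq).2⟩

lemma splits_node_ne {l : List PTree} (h : l ≠ []) :
    (PTree.node l).splits = (splitsAux l).map fun p => (PTree.node p.1, PTree.node p.2) := by
  cases l with
  | nil => exact absurd rfl h
  | cons t ts => rfl

lemma perm_flatMap_append {α β : Type*} (l : List α) (f g : α → List β) :
    (l.flatMap fun a => f a ++ g a).Perm (l.flatMap f ++ l.flatMap g) := by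
  induction l with
  | nil => simp
  | cons a l ih =>
    simp only [List.flatMap_cons]
    exact ((ih.append_left _)).trans (shuffle (f a) (g a) (l.flatMap f) (l.flatMap g))

lemma flatMap_single {α β : Type*} (l : List α) (f : α → β) :
    (l.flatMap fun a => [f a]) = l.map f := by
  induction l with
  | nil => rfl
  | cons a l ih => simp [List.flatMap_cons, ih]

lemma perm_flatMap_comm {α β γ : Type*} (l : List α) (m : List β) (f : α → β → γ) :
    (l.flatMap fun a => m.map (f a)).Perm (m.flatMap fun b => l.map fun a => f a b) := by
  induction l with
  | nil => simp
  | cons a l ih =>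
    simp only [List.flatMap_cons, List.map_cons]
    have h1 : (m.flatMap fun b => f a b :: l.map fun a => f a b).Perm
        ((m.flatMap fun b => [f a b]) ++ m.flatMap fun b => l.map fun a => f a b) := by
      simpa using perm_flatMap_append m (fun b => [f a b]) (fun b => l.map fun a => f a b)
    rw [flatMap_single] at h1
    exact ((ih.append_left _)).trans h1.symm

mutual
theorem treePerm (t : PTree) : t.lsplits2.Perm t.splits2 := by
  cases t with
  | node l =>
    cases l with
    | nil => simp [PTree.lsplits2, PTree.splits2, PTree.splits]
    | cons s ss =>
      have hL : (PTree.node (s :: ss)).lsplits2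
          = (LA (s :: ss)).map fun p => (PTree.node p.1, PTree.node p.2.1, PTree.node p.2.2) := by
        rw [PTree.lsplits2, splits_node_ne (List.cons_ne_nil s ss), LA, List.flatMap_map,
          List.map_flatMap]
        refine List.flatMap_congr ?_
        intro p hp
        simp only [Function.comp_def]
        rw [splits_node_ne (splitsAux_ne _ p hp).1, List.map_map, List.map_map]
        rfl
      have hR : (PTree.node (s :: ss)).splits2
          = (RA (s :: ss)).map fun p => (PTree.node p.1, PTree.node p.2.1, PTree.node p.2.2) := by
        rw [PTree.splits2, splits_node_ne (List.cons_ne_nil s ss), RA, List.flatMap_map,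
          List.map_flatMap]
        refine List.flatMap_congr ?_
        intro p hp
        simp only [Function.comp_def]
        rw [splits_node_ne (splitsAux_ne _ p hp).2, List.map_map, List.map_map]
        rfl
      rw [hL, hR]
      exact (forestPerm (s :: ss)).map _
  termination_by sizeOf t

theorem forestPerm (l : List PTree) : (LA l).Perm (RA l) := by
  cases l with
  | nil => simp [LA, RA, splitsAux]
  | cons t ts =>
    have hLA : LA (t :: ts) =
        ((t.lsplits2).map fun w => ([w.1], [w.2.1], w.2.2 :: ts)) ++
          (splitsAux ts).flatMap (fun q =>
            ((t.splits).map fun r => ([r.1], r.2 :: q.1, q.2)) ++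
              (splitsAux q.1).map fun s => (t :: s.1, s.2, q.2)) := by
      simp [LA, PTree.lsplits2, splitsAux, List.flatMap_append, List.flatMap_map,
        List.map_flatMap, List.map_map, List.map_append, Function.comp_def]
    have hRA : RA (t :: ts) =
        (t.splits).flatMap (fun p =>
          (((p.2.splits).map fun r => ([p.1], [r.1], r.2 :: ts)) ++
            (splitsAux ts).map fun s => ([p.1], p.2 :: s.1, s.2))) ++
          ((RA ts).map fun w => (t :: w.1, w.2.1, w.2.2)) := by
      simp [RA, splitsAux, List.flatMap_append, List.flatMap_map,
        List.map_flatMap, List.map_map, List.map_append, Function.comp_def]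
    have hY1 : ((t.splits2).map fun w => ([w.1], [w.2.1], w.2.2 :: ts))
        = (t.splits).flatMap fun p => (p.2.splits).map fun r => ([p.1], [r.1], r.2 :: ts) := by
      simp [PTree.splits2, List.map_flatMap, List.map_map, Function.comp_def]
    have hX3 : ((LA ts).map fun w => (t :: w.1, w.2.1, w.2.2))
        = (splitsAux ts).flatMap fun q => (splitsAux q.1).map fun s => (t :: s.1, s.2, q.2) := by
      simp [LA, List.map_flatMap, List.map_map, Function.comp_def]
    have hY3 : ((RA ts).map fun w => (t :: w.1, w.2.1, w.2.2))
        = (splitsAux ts).flatMap fun q => (splitsAux q.2).map fun s => (t :: q.1, s.1, s.2) := by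
      simp [RA, List.map_flatMap, List.map_map, Function.comp_def]
    rw [hLA, hRA]
    have s1 : ((splitsAux ts).flatMap fun q =>
          ((t.splits).map fun r => ([r.1], r.2 :: q.1, q.2)) ++
            (splitsAux q.1).map fun s => (t :: s.1, s.2, q.2)).Perm
        (((splitsAux ts).flatMap fun q => (t.splits).map fun r => ([r.1], r.2 :: q.1, q.2)) ++
          (splitsAux ts).flatMap fun q => (splitsAux q.1).map fun s => (t :: s.1, s.2, q.2)) :=
      perm_flatMap_append _ _ _
    have s2 : ((t.splits).flatMap fun p =>
          ((p.2.splits).map fun r => ([p.1], [r.1], r.2 :: ts)) ++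
            (splitsAux ts).map fun s => ([p.1], p.2 :: s.1, s.2)).Perm
        (((t.splits).flatMap fun p => (p.2.splits).map fun r => ([p.1], [r.1], r.2 :: ts)) ++
          (t.splits).flatMap fun p => (splitsAux ts).map fun s => ([p.1], p.2 :: s.1, s.2)) :=
      perm_flatMap_append _ _ _
    have pX1Y1 : ((t.lsplits2).map fun w => ([w.1], [w.2.1], w.2.2 :: ts)).Perm
        ((t.splits).flatMap fun p => (p.2.splits).map fun r => ([p.1], [r.1], r.2 :: ts)) := by
      rw [← hY1]; exact (treePerm t).map _
    have pX2Y2 : ((splitsAux ts).flatMap fun q =>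
          (t.splits).map fun r => ([r.1], r.2 :: q.1, q.2)).Perm
        ((t.splits).flatMap fun p => (splitsAux ts).map fun s => ([p.1], p.2 :: s.1, s.2)) :=
      perm_flatMap_comm (splitsAux ts) t.splits fun q r => ([r.1], r.2 :: q.1, q.2)
    have pX3Y3 : ((splitsAux ts).flatMap fun q =>
          (splitsAux q.1).map fun s => (t :: s.1, s.2, q.2)).Perm
        ((splitsAux ts).flatMap fun q => (splitsAux q.2).map fun s => (t :: q.1, s.1, s.2)) := by
      rw [← hX3, ← hY3]; exact (forestPerm ts).map _
    refine ((s1.append_left _).trans ?_).trans (s2.append_right _).symm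
    rw [List.append_assoc, hY3]
    exact pX1Y1.append (pX2Y2.append pX3Y3)
  termination_by sizeOf l
end
noncomputable def F3 (w : PTree × PTree × PTree) :
    TensorProduct ℚ TreeSpace (TensorProduct ℚ TreeSpace TreeSpace) :=
  Finsupp.single w.1 (1 : ℚ) ⊗ₜ[ℚ]
    (Finsupp.single w.2.1 (1 : ℚ) ⊗ₜ[ℚ] Finsupp.single w.2.2 (1 : ℚ))

lemma tmul_list_sum {M N : Type*} [AddCommMonoid M] [AddCommMonoid N] [Module ℚ M] [Module ℚ N]
    (x : M) (l : List N) :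
    x ⊗ₜ[ℚ] l.sum = (l.map fun y => x ⊗ₜ[ℚ] y).sum := by
  induction l with
  | nil => simp [TensorProduct.tmul_zero]
  | cons a l ih => simp [TensorProduct.tmul_add, ih]

lemma list_sum_tmul {M N : Type*} [AddCommMonoid M] [AddCommMonoid N] [Module ℚ M] [Module ℚ N]
    (y : N) (l : List M) :
    l.sum ⊗ₜ[ℚ] y = (l.map fun x => x ⊗ₜ[ℚ] y).sum := by
  induction l with
  | nil => simp [TensorProduct.zero_tmul]
  | cons a l ih => simp [TensorProduct.add_tmul, ih]

lemma equiv_list_sum {M N : Type*} [AddCommMonoid M] [AddCommMonoid N] [Module ℚ M] [Module ℚ N]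
    (f : M ≃ₗ[ℚ] N) (l : List M) : f l.sum = (l.map fun x => f x).sum :=
  map_list_sum f.toLinearMap l

lemma delta_single (t : PTree) : delta (Finsupp.single t 1) = deltaAux t := by
  simp [delta, Finsupp.lift_apply, Finsupp.sum_single_index]

lemma sum_map_flatMap {M α β : Type*} [AddCommMonoid M] (l : List α) (f : α → List β)
    (F : β → M) : ((l.flatMap f).map F).sum = (l.map fun a => ((f a).map F).sum).sum := by
  induction l with
  | nil => rfl
  | cons a l ih => simp [List.flatMap_cons, List.sum_append, ih]

lemma right_side (t : PTree) :
    (TensorProduct.map LinearMap.id delta) (delta (Finsupp.single t 1)) =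
      ((t.splits2).map F3).sum := by
  rw [delta_single, deltaAux, map_list_sum, PTree.splits2, sum_map_flatMap, List.map_map]
  congr 1
  refine List.map_congr_left fun p _ => ?_
  simp only [Function.comp_apply, TensorProduct.map_tmul, LinearMap.id_coe, id_eq,
    delta_single, deltaAux]
  rw [tmul_list_sum, List.map_map, List.map_map]
  rfl

lemma left_side (t : PTree) :
    (TensorProduct.assoc ℚ TreeSpace TreeSpace TreeSpace)
        ((TensorProduct.map delta LinearMap.id) (delta (Finsupp.single t 1))) =
      ((t.lsplits2).map F3).sum := by
  rw [delta_single, deltaAux, map_list_sum, equiv_list_sum, PTree.lsplits2, sum_map_flatMap,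
    List.map_map, List.map_map]
  congr 1
  refine List.map_congr_left fun p _ => ?_
  simp only [Function.comp_apply, TensorProduct.map_tmul, LinearMap.id_coe, id_eq,
    delta_single, deltaAux]
  rw [list_sum_tmul, equiv_list_sum, List.map_map, List.map_map, List.map_map]
  congr 1

/-- Coassociativity of the splitting coproduct: `(Δ ⊗ 1)∘Δ = (1 ⊗ Δ)∘Δ`, both sides
equaling the sum of `F_{w₀} ⊗ F_{w₁} ⊗ F_{w₂}` over all 2-fold splittings of `w`. -/
theorem delta_coassoc (t : PTree) :
    (TensorProduct.assoc ℚ TreeSpace TreeSpace TreeSpace)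
        ((TensorProduct.map delta LinearMap.id) (delta (Finsupp.single t 1))) =
      (TensorProduct.map LinearMap.id delta) (delta (Finsupp.single t 1)) ∧
    (TensorProduct.map LinearMap.id delta) (delta (Finsupp.single t 1)) =
      (((PTree.splits2 t).map fun p =>
        Finsupp.single p.1 (1 : ℚ) ⊗ₜ[ℚ]
          (Finsupp.single p.2.1 (1 : ℚ) ⊗ₜ[ℚ] Finsupp.single p.2.2 (1 : ℚ)) :
            List (TensorProduct ℚ TreeSpace (TensorProduct ℚ TreeSpace TreeSpace)))).sum := by
  have h2 : (TensorProduct.map LinearMap.id delta) (delta (Finsupp.single t 1)) =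
      (((PTree.splits2 t).map fun p =>
        Finsupp.single p.1 (1 : ℚ) ⊗ₜ[ℚ]
          (Finsupp.single p.2.1 (1 : ℚ) ⊗ₜ[ℚ] Finsupp.single p.2.2 (1 : ℚ)) :
            List (TensorProduct ℚ TreeSpace (TensorProduct ℚ TreeSpace TreeSpace)))).sum :=
    right_side t
  refine ⟨?_, h2⟩
  rw [left_side t, h2]
  exact (((treePerm t).map F3).sum_eq)
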